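/- arXiv:1801.08207 — 2 statements merged into one kernel-verified Lean document; each statement's English description precedes it below -/
import Mathlib

section
/- Let P(s,t) = Σ a_{i,j} s^j t^i and Q(s,t) = Σ b_{i,j} s^j t^i be elements of ℤ[s^{±1}][[t]] with all a_{i,j}, b_{i,j} ≥ 0, and write P·Q = Σ c_{i,j} s^j t^i. If a_{i,j} = 0 whenever j - i > r₁, the coefficient a_{0,r₁} is nonzero, and c_{i,j} = 0 whenever j - i > r₂, then b_{i,j} = 0 whenever j - i > r₂ - r₁. -/
/-- if `a` is supported in `j - i ≤ r₁`, `a 0 r₁ ≠ 0`, and the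
convolution product `c` is supported in `j - i ≤ r₂`, then `b` is supported in
`j - i ≤ r₂ - r₁`.  Series in `ℤ[s^±1][[t]]` are modeled as coefficient
functions `ℤ × ℤ → ℤ` supported in `i ≥ 0`, row-finite, with nonnegative
coefficients. -/
theorem stmt1 (a b c : ℤ → ℤ → ℤ) (r₁ r₂ : ℤ)
    (ha_nonneg : ∀ i j, 0 ≤ a i j) (hb_nonneg : ∀ i j, 0 ≤ b i j)
    (ha_pos : ∀ i < 0, ∀ j, a i j = 0) (hb_pos : ∀ i < 0, ∀ j, b i j = 0)
    (ha_row : ∀ i, (Function.support (a i)).Finite)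
    (hb_row : ∀ i, (Function.support (b i)).Finite)
    (hc : ∀ i j, c i j = ∑ᶠ p : ℤ, ∑ᶠ q : ℤ, a p q * b (i - p) (j - q))
    (ha : ∀ i j, j - i > r₁ → a i j = 0)
    (ha0 : a 0 r₁ ≠ 0)
    (hcv : ∀ i j, j - i > r₂ → c i j = 0) :
    ∀ i j, j - i > r₂ - r₁ → b i j = 0 := by
  intro i j hij
  set j' := j + r₁ with hj'
  have hc0 : c i j' = 0 := hcv i j' (by omega)
  set f : ℤ → ℤ := fun p => ∑ᶠ q : ℤ, a p q * b (i - p) (j' - q) with hf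
  have hterm_nonneg : ∀ p q, 0 ≤ a p q * b (i - p) (j' - q) := fun p q =>
    mul_nonneg (ha_nonneg _ _) (hb_nonneg _ _)
  have hf_nonneg : ∀ p, 0 ≤ f p := fun p => finsum_nonneg (hterm_nonneg p)
  -- support of f is finite
  have hf_fin : (Function.support f).Finite := by
    apply Set.Finite.subset (Set.finite_Icc 0 i)
    intro p hp
    by_contra hpI
    simp only [Set.mem_Icc, not_and_or, not_le] at hpI
    apply hp
    apply finsum_eq_zero_of_forall_eq_zero
    intro q
    rcases hpI with h | h
    · rw [ha_pos p h q, zero_mul]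
    · rw [hb_pos (i - p) (by omega) (j' - q), mul_zero]
  -- inner support for p = 0 is finite
  have hg_fin : (Function.support fun q => a 0 q * b (i - 0) (j' - q)).Finite := by
    apply Set.Finite.subset (ha_row 0)
    intro q hq
    simp only [Function.mem_support] at hq ⊢
    intro h0
    exact hq (by rw [h0, zero_mul])
  have h1 : f 0 ≤ c i j' := by
    rw [hc]
    exact single_le_finsum 0 hf_fin hf_nonneg
  have h2 : a 0 r₁ * b i j ≤ f 0 := by
    have := single_le_finsum r₁ hg_fin (hterm_nonneg 0)
    simpa [hf, hj', sub_zero] using this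
  have hbnn := hb_nonneg i j
  have ha0' : 0 < a 0 r₁ := lt_of_le_of_ne (ha_nonneg 0 r₁) (Ne.symm ha0)
  nlinarith [h1, h2, hc0]
end

section
/- Suppose P(s,t) = Σ a_{i,j} s^j t^i and h(s) = Σ_j v_j s^j are, respectively, a series in ℤ[s^{±1}][[t]] and a nonzero Laurent polynomial with nonnegative coefficients, and suppose E(s,t) = Σ e_{i,j} s^j t^i has nonnegative coefficients with h(s)·E(s,t) ⪯ P(s,t)·∏_{i=1}^e (1 + s^{d_i} t) coefficientwise, where d_i ≥ 1. If a_{i,j} = 0 for all j − i > r (finite regularity bound for P), then e_{i,j} = 0 for all j − i > r + Σ_{i=1}^e d_i − end(h), where end(h) is the largest j with v_j ≠ 0. In particular E has a finite 'regularity' bound. -/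
/-- suppose `h(s) = Σ vⱼ sʲ` is a nonzero Laurent polynomial with
nonnegative coefficients and top degree `end(h) = dEnd`, `P = Σ a_{i,j} sʲ tⁱ`
and `E = Σ e_{i,j} sʲ tⁱ` have nonnegative coefficients, and
`h(s)·E(s,t) ⪯ P(s,t)·∏_{i=1}^e (1 + s^{dᵢ} t)` coefficientwise (`dᵢ ≥ 1`).
If `a_{i,j} = 0` for `j - i > r`, then `e_{i,j} = 0` for
`j - i > r + Σ dᵢ - end(h)`. -/
theorem stmt10 (e : ℕ) (dI : Fin e → ℤ) (hdI : ∀ t, 1 ≤ dI t)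
    (a E : ℕ → ℤ → ℤ) (v : ℤ → ℤ) (dEnd r : ℤ)
    (ha_nonneg : ∀ i j, 0 ≤ a i j) (hE_nonneg : ∀ i j, 0 ≤ E i j)
    (hv_nonneg : ∀ j, 0 ≤ v j) (hv_fin : (Function.support v).Finite)
    (hvEnd : v dEnd ≠ 0) (hvTop : ∀ j, j > dEnd → v j = 0)
    (hle : ∀ (i : ℕ) (j : ℤ),
      (∑ᶠ q : ℤ, v q * E i (j - q)) ≤
        ∑ S : Finset (Fin e),
          (if S.card ≤ i then a (i - S.card) (j - ∑ t ∈ S, dI t) else 0))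
    (ha : ∀ (i : ℕ) (j : ℤ), j - i > r → a i j = 0) :
    ∀ (i : ℕ) (j : ℤ), j - i > r + (∑ t : Fin e, dI t) - dEnd → E i j = 0 := by
  intro i j hj
  have hvE : 1 ≤ v dEnd := lt_of_le_of_ne (hv_nonneg dEnd) (Ne.symm hvEnd)
  have key := hle i (j + dEnd)
  -- RHS is zero
  have hRHS : (∑ S : Finset (Fin e),
      (if S.card ≤ i then a (i - S.card) (j + dEnd - ∑ t ∈ S, dI t) else 0)) = 0 := by
    apply Finset.sum_eq_zero
    intro S _
    split_ifs with hc
    · apply ha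
      have h1 : (∑ t : Fin e, dI t) = (∑ t ∈ S, dI t) + ∑ t ∈ Sᶜ, dI t :=
        (Finset.sum_add_sum_compl S _).symm
      have h2 : (0 : ℤ) ≤ ∑ t ∈ Sᶜ, dI t :=
        Finset.sum_nonneg fun t _ => le_trans zero_le_one (hdI t)
      have hc' : ((i - S.card : ℕ) : ℤ) = (i : ℤ) - S.card := by
        omega
      rw [hc']
      omega
    · rfl
  rw [hRHS] at key
  -- LHS bounds v dEnd * E i j
  have hfin : (Function.support fun q => v q * E i (j + dEnd - q)).Finite := by
    apply hv_fin.subset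
    intro q hq
    simp only [Function.mem_support] at hq ⊢
    intro h; apply hq; rw [h, zero_mul]
  have hterm : v dEnd * E i (j + dEnd - dEnd) ≤
      ∑ᶠ q : ℤ, v q * E i (j + dEnd - q) :=
    single_le_finsum dEnd hfin fun q => mul_nonneg (hv_nonneg q) (hE_nonneg i _)
  have hsimp : j + dEnd - dEnd = j := by ring
  rw [hsimp] at hterm
  have hEj : 0 ≤ E i j := hE_nonneg i j
  nlinarith [hterm, key]
end
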